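/- arXiv:0904.0333 — 9 statements merged into one kernel-verified Lean document; each statement's English description precedes it below -/
import Mathlib

section
/- For a square matrix M over ℝ partitioned by index sets a and b with all relevant principal submatrices invertible, partial inversion with respect to a followed by partial inversion with respect to b equals partial inversion with respect to b followed by partial inversion with respect to a. -/
/-!
Partial inversion is characterised by an exchange property: `N` is the partial inverse of `M`
on `s` when, for every `x` with `y = M x`, `N` maps the vector equal to `y` on `s` and to `x`
off `s` to the vector equal to `x` on `s` and to `y` off `s`. A single pivot step `invStep · k`
turns a partial inverse on `s` into one on `insert k s` (its pivot is nonzero because the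
principal submatrix on `insert k s` is invertible), so `invList l M` is a partial inverse
of `M` on the set of entries of `l`. Since the principal submatrix on `s` is invertible, the
vectors `(y_s, x_{sᶜ})` exhaust the whole space, so the partial inverse on `s` is unique; hence
it depends only on the set `s`, not on the order of the pivots.
-/

/-- Partial inversion of a square real matrix with respect to a single index `k`. -/
noncomputable def invStep {ι : Type*} [DecidableEq ι] (M : Matrix ι ι ℝ) (k : ι) : Matrix ι ι ℝ :=
  Matrix.of fun i j =>
    if i = k then (if j = k then 1 / M k k else - M k j / M k k)
    else if j = k then M i k / M k k
    else M i j - M i k * M k j / M k k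

/-- Partial inversion with respect to a sequence of indices, applied in order. -/
noncomputable def invList {ι : Type*} [DecidableEq ι] (l : List ι) (M : Matrix ι ι ℝ) : Matrix ι ι ℝ :=
  l.foldl invStep M

/-- All principal submatrices of `M` are invertible. -/
def allPrincipalInvertible {ι : Type*} [Fintype ι] [DecidableEq ι]
    (M : Matrix ι ι ℝ) : Prop :=
  ∀ s : Finset ι,
    (M.submatrix (fun i : s => (i : ι)) (fun i : s => (i : ι))).det ≠ 0

open Matrix Finset Function

section Field

variable {ι K : Type*} [Fintype ι] [DecidableEq ι] [Field K]

theorem Matrix.eq_zero_of_mulVec_eq_zero_on {M : Matrix ι ι K} {t : Finset ι}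
    (ht : (M.submatrix ((↑) : t → ι) (↑)).det ≠ 0) {x : ι → K}
    (hMx : ∀ i ∈ t, (M *ᵥ x) i = 0) (hx : ∀ i ∉ t, x i = 0) : x = 0 := by
  have hsub : M.submatrix ((↑) : t → ι) (↑) *ᵥ (fun j : t => x j) = 0 := by
    funext i
    rw [Pi.zero_apply, ← hMx i i.2]
    simp only [mulVec, dotProduct, submatrix_apply]
    rw [sum_coe_sort t (fun j => M i j * x j)]
    exact sum_subset (subset_univ t) fun j _ hj => by rw [hx j hj, mul_zero]
  by_contra hx0
  refine ht (exists_mulVec_eq_zero_iff.mp ⟨fun j : t => x j, fun hy => hx0 ?_, hsub⟩)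
  funext j
  by_cases hj : j ∈ t
  · exact congrFun hy ⟨j, hj⟩
  · exact hx j hj

theorem Matrix.piecewise_mulVec_surjective {M : Matrix ι ι K} {s : Finset ι}
    (hs : (M.submatrix ((↑) : s → ι) (↑)).det ≠ 0) :
    Surjective fun x => s.piecewise (M *ᵥ x) x := by
  set A : Matrix ι ι K := of fun i => if i ∈ s then M i else Pi.single i 1
  have hA : (fun x => s.piecewise (M *ᵥ x) x) = (A *ᵥ ·) := by
    ext x i
    by_cases hi : i ∈ s <;> simp [A, hi, mulVec]
  rw [hA, mulVec_surjective_iff_isUnit, isUnit_iff_isUnit_det, isUnit_iff_ne_zero]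
  intro hdet
  obtain ⟨x, hx0, hx⟩ := exists_mulVec_eq_zero_iff.mpr hdet
  rw [← congrFun hA x] at hx
  refine hx0 (eq_zero_of_mulVec_eq_zero_on hs (fun i hi => ?_) fun i hi => ?_)
  · simpa [hi] using congrFun hx i
  · simpa [hi] using congrFun hx i

def IsPartialInverse (M : Matrix ι ι K) (s : Finset ι) (N : Matrix ι ι K) : Prop :=
  ∀ x, N *ᵥ s.piecewise (M *ᵥ x) x = s.piecewise x (M *ᵥ x)

theorem isPartialInverse_empty (M : Matrix ι ι K) : IsPartialInverse M ∅ M := by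
  intro x
  simp only [piecewise_empty]

namespace IsPartialInverse

variable {M N N' : Matrix ι ι K} {s : Finset ι}

theorem eq (hs : (M.submatrix ((↑) : s → ι) (↑)).det ≠ 0) (hN : IsPartialInverse M s N)
    (hN' : IsPartialInverse M s N') : N = N' :=
  ext_iff_mulVec.mpr fun v => by
    obtain ⟨x, rfl⟩ := piecewise_mulVec_surjective hs v
    exact (hN x).trans (hN' x).symm

theorem apply_self_ne_zero {k : ι} (hs : (M.submatrix ((↑) : s → ι) (↑)).det ≠ 0)
    (hks : (M.submatrix ((↑) : ↥(insert k s) → ι) (↑)).det ≠ 0) (hN : IsPartialInverse M s N)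
    (hk : k ∉ s) : N k k ≠ 0 := by
  obtain ⟨x, hx⟩ := piecewise_mulVec_surjective hs (Pi.single k 1)
  dsimp only at hx
  have hNk : N k k = (M *ᵥ x) k := by
    have hcol : N k k = (N *ᵥ Pi.single k 1) k := by simp
    rw [hcol, ← hx, hN x, piecewise_eq_of_notMem _ _ _ hk]
  intro h0
  have hx0 : x = 0 := by
    refine eq_zero_of_mulVec_eq_zero_on hks (fun i hi => ?_) fun i hi => ?_
    · rcases mem_insert.mp hi with rfl | his
      · rw [← hNk, h0]
      · simpa [his, ne_of_mem_of_not_mem his hk] using congrFun hx i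
    · simp only [mem_insert, not_or] at hi
      simpa [hi.2, hi.1] using congrFun hx i
  rw [hx0, mulVec_zero, piecewise_same] at hx
  simpa using congrFun hx k

end IsPartialInverse

end Field

theorem invList_append {ι : Type*} [DecidableEq ι] (l₁ l₂ : List ι) (M : Matrix ι ι ℝ) :
    invList (l₁ ++ l₂) M = invList l₂ (invList l₁ M) :=
  List.foldl_append

section Real

variable {ι : Type*} [Fintype ι] [DecidableEq ι]

theorem invStep_mulVec_update {N : Matrix ι ι ℝ} {k : ι} (hk : N k k ≠ 0) (z : ι → ℝ) :
    invStep N k *ᵥ update z k ((N *ᵥ z) k) = update (N *ᵥ z) k (z k) := by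
  have hsplit : ∀ (A : Matrix ι ι ℝ) (i : ι) (y : ι → ℝ),
      (A *ᵥ y) i = A i k * y k + ∑ j ∈ univ.erase k, A i j * y j :=
    fun A i y => (add_sum_erase _ _ (mem_univ k)).symm
  set r := ∑ j ∈ univ.erase k, N k j * z j
  funext i
  rw [hsplit (invStep N k), update_self, hsplit N k]
  rcases eq_or_ne i k with rfl | hi
  · have hrow : ∑ j ∈ univ.erase i, invStep N i i j * update z i (N i i * z i + r) j
        = -r / N i i := by
      rw [neg_div, sum_div, ← sum_neg_distrib]
      refine sum_congr rfl fun j hj => ?_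
      simp only [invStep, of_apply, update_of_ne (ne_of_mem_erase hj), if_neg (ne_of_mem_erase hj),
        if_true]
      ring
    rw [hrow, update_self]
    simp only [invStep, of_apply, if_true]
    field_simp
    ring
  · have hrow : ∑ j ∈ univ.erase k, invStep N k i j * update z k (N k k * z k + r) j
        = ∑ j ∈ univ.erase k, N i j * z j - N i k / N k k * r := by
      rw [mul_sum, ← sum_sub_distrib]
      refine sum_congr rfl fun j hj => ?_
      simp only [invStep, of_apply, update_of_ne (ne_of_mem_erase hj), if_neg (ne_of_mem_erase hj),
        if_neg hi]
      ring
    rw [hrow, update_of_ne hi, hsplit N i]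
    simp only [invStep, of_apply, if_neg hi, if_true]
    field_simp
    ring

theorem IsPartialInverse.invStep {M N : Matrix ι ι ℝ} {s : Finset ι} {k : ι}
    (hN : IsPartialInverse M s N) (hk : k ∉ s) (hkk : N k k ≠ 0) :
    IsPartialInverse M (insert k s) (invStep N k) := by
  intro x
  have h := invStep_mulVec_update hkk (s.piecewise (M *ᵥ x) x)
  rw [hN x, piecewise_eq_of_notMem _ _ _ hk, piecewise_eq_of_notMem _ _ _ hk] at h
  rwa [piecewise_insert, piecewise_insert]

theorem isPartialInverse_invList {M : Matrix ι ι ℝ} (hM : allPrincipalInvertible M) {l : List ι}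
    (hl : l.Nodup) : IsPartialInverse M l.toFinset (invList l M) := by
  induction l using List.reverseRecOn with
  | nil => exact isPartialInverse_empty M
  | append_singleton l k ih =>
    obtain ⟨hl, -, hkl⟩ := List.nodup_append'.mp hl
    have hk : k ∉ l.toFinset := fun h => hkl (List.mem_toFinset.mp h) (List.mem_singleton_self k)
    have hN := ih hl
    have hs : (l ++ [k]).toFinset = insert k l.toFinset := by ext; simp
    rw [invList_append, hs]
    exact hN.invStep hk (hN.apply_self_ne_zero (hM _) (hM _) hk)

end Real

/-- partial inversion on disjoint index sets commutes. -/
theorem partialInversion_comm {ι : Type*} [Fintype ι] [DecidableEq ι]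
    (M : Matrix ι ι ℝ) (hM : allPrincipalInvertible M)
    (la lb : List ι) (hna : la.Nodup) (hnb : lb.Nodup)
    (hdisj : Disjoint la.toFinset lb.toFinset) :
    invList lb (invList la M) = invList la (invList lb M) := by
  have hd := List.disjoint_toFinset_iff_disjoint.mp hdisj
  have hab := isPartialInverse_invList hM (hna.append hnb hd)
  have hba := isPartialInverse_invList hM (hnb.append hna hd.symm)
  rw [List.toFinset_append, invList_append] at hab hba
  rw [union_comm] at hba
  exact hab.eq (hM _) hba
end

section
/- For a 2×2 block matrix M indexed by a partition (a,b) of the index set with M_{aa} invertible, partial inversion with respect to a yields the block matrix with blocks (M_{aa}⁻¹, -M_{aa}⁻¹M_{ab}; M_{ba}M_{aa}⁻¹, M_{bb} - M_{ba}M_{aa}⁻¹M_{ab}). -/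
/-!
Write `E_s = piecewiseRows s M 1` for the matrix whose rows indexed by `s` are those of `M` and
whose other rows are those of the identity, and `F_s = piecewiseRows s 1 M`. Pivoting `M` on the
distinct indices of `s` gives a matrix `N` with `N * E_s = F_s`: it exchanges the
`s`-coordinates of `x` and `M x`. A pivot on `k ∉ s` carries this invariant from `s` to
`insert k s`, because `E_{insert k s}` is `E_s` with row `k` replaced by row `k` of `N * E_s`.
The same identity gives `det E_{insert k s} = N k k * det E_s`, and `det E_s` is the principal
minor of `M` on `s`, so every pivot is nonzero. For `s = a` we have `E_a = (M_aa, M_ab; 0, 1)`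
and `F_a = (1, 0; M_ba, M_bb)`, and `F_a * E_a⁻¹` is the claimed block matrix.
-/

open Matrix

namespace Matrix

lemma det_updateRow_mul_row {ι R : Type*} [Fintype ι] [DecidableEq ι] [CommRing R]
    (N E : Matrix ι ι R) (k : ι) :
    (E.updateRow k ((N * E) k)).det = N k k * E.det := by
  rw [mul_apply_eq_vecMul, vecMul_eq_sum, det_updateRow_sum, smul_eq_mul]

lemma updateRow_one_eq_one_add_vecMulVec {ι R : Type*} [DecidableEq ι] [Ring R]
    (k : ι) (r : ι → R) :
    (1 : Matrix ι ι R).updateRow k r = 1 + vecMulVec (Pi.single k 1) (r - Pi.single k 1) := by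
  ext a b
  by_cases ha : a = k
  · subst ha
    simp [vecMulVec_apply, one_apply, Pi.single_apply, eq_comm]
  · simp [vecMulVec_apply, ha]

section PiecewiseRows

variable {m n R : Type*} [DecidableEq m]

def piecewiseRows (s : Finset m) (A B : Matrix m n R) : Matrix m n R :=
  of (s.piecewise A B)

variable (s : Finset m) (A B : Matrix m n R)

lemma piecewiseRows_of_mem {i : m} (hi : i ∈ s) : piecewiseRows s A B i = A i :=
  s.piecewise_eq_of_mem _ _ hi

lemma piecewiseRows_of_notMem {i : m} (hi : i ∉ s) : piecewiseRows s A B i = B i :=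
  s.piecewise_eq_of_notMem _ _ hi

@[simp]
lemma piecewiseRows_empty : piecewiseRows (∅ : Finset m) A B = B :=
  Finset.piecewise_empty A B

lemma piecewiseRows_insert (k : m) :
    piecewiseRows (insert k s) A B = (piecewiseRows s A B).updateRow k (A k) :=
  s.piecewise_insert _ _ k

lemma det_piecewiseRows_one [Fintype m] [CommRing R] (M : Matrix m m R) :
    (piecewiseRows s M 1).det
      = (M.submatrix (fun i : s => (i : m)) (fun i : s => (i : m))).det := by
  let e := Equiv.sumCompl (· ∈ s)
  have hblocks : (piecewiseRows s M 1).submatrix e e =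
      fromBlocks (M.submatrix (fun i : s => (i : m)) (fun i : s => (i : m)))
        (M.submatrix (fun i : s => (i : m)) (fun j : {x // x ∉ s} => (j : m))) 0 1 := by
    ext (i | i) (j | j)
    · simp [e, piecewiseRows_of_mem s _ _ i.2]
    · simp [e, piecewiseRows_of_mem s _ _ i.2]
    · simp [e, piecewiseRows_of_notMem s _ _ i.2, ne_of_mem_of_not_mem j.2 i.2 |>.symm]
    · simp [e, piecewiseRows_of_notMem s _ _ i.2, one_apply, Subtype.ext_iff]
  rw [← det_submatrix_equiv_self e, hblocks, det_fromBlocks_zero₂₁, det_one, mul_one]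

end PiecewiseRows

section Blocks

variable {α β R : Type*} [Fintype α] [DecidableEq α] [DecidableEq β] [Zero R] [One R]

lemma piecewiseRows_inl_self_one (M : Matrix (α ⊕ β) (α ⊕ β) R) :
    piecewiseRows (Finset.univ.map .inl) M 1 = fromBlocks M.toBlocks₁₁ M.toBlocks₁₂ 0 1 := by
  ext (i | i) (j | j) <;>
    simp [piecewiseRows_of_mem, piecewiseRows_of_notMem, toBlocks₁₁, toBlocks₁₂, one_apply]

lemma piecewiseRows_inl_one_self (M : Matrix (α ⊕ β) (α ⊕ β) R) :
    piecewiseRows (Finset.univ.map .inl) 1 M = fromBlocks 1 0 M.toBlocks₂₁ M.toBlocks₂₂ := by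
  ext (i | i) (j | j) <;>
    simp [piecewiseRows_of_mem, piecewiseRows_of_notMem, toBlocks₂₁, toBlocks₂₂, one_apply]

end Blocks

lemma eq_fromBlocks_of_mul_fromBlocks {α β R : Type*} [Fintype α] [Fintype β]
    [DecidableEq α] [DecidableEq β] [CommRing R] {A : Matrix α α R} {B : Matrix α β R}
    {C : Matrix β α R} {D : Matrix β β R} {N : Matrix (α ⊕ β) (α ⊕ β) R} (hA : IsUnit A.det)
    (hN : N * fromBlocks A B 0 1 = fromBlocks 1 0 C D) :
    N = fromBlocks A⁻¹ (-(A⁻¹ * B)) (C * A⁻¹) (D - C * A⁻¹ * B) := by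
  have hE : IsUnit (fromBlocks A B 0 (1 : Matrix β β R)).det := by
    rwa [det_fromBlocks_zero₂₁, det_one, mul_one]
  have hAinv : (fromBlocks A B 0 (1 : Matrix β β R))⁻¹ = fromBlocks A⁻¹ (-(A⁻¹ * B)) 0 1 := by
    rw [inv_fromBlocks_zero₂₁_of_isUnit_iff _ _ _ (by simpa [isUnit_iff_isUnit_det] using hA),
      inv_one, Matrix.mul_one]
  calc N = N * fromBlocks A B 0 1 * (fromBlocks A B 0 1)⁻¹ :=
        (mul_nonsing_inv_cancel_right _ _ hE).symm
    _ = fromBlocks 1 0 C D * fromBlocks A⁻¹ (-(A⁻¹ * B)) 0 1 := by rw [hN, hAinv]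
    _ = _ := by
      simp only [fromBlocks_multiply, Matrix.one_mul, Matrix.mul_zero,
        Matrix.mul_one, Matrix.mul_neg, Matrix.mul_assoc, add_zero]
      rw [sub_eq_neg_add]

end Matrix

section Sweep

variable {ι : Type*} [Fintype ι] [DecidableEq ι]

lemma invStep_mul_updateRow_one (N : Matrix ι ι ℝ) (k : ι) (hk : N k k ≠ 0) :
    invStep N k * (1 : Matrix ι ι ℝ).updateRow k (N k) = N.updateRow k (Pi.single k 1) := by
  rw [updateRow_one_eq_one_add_vecMulVec, Matrix.mul_add, Matrix.mul_one, mul_vecMulVec,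
    mulVec_single_one]
  ext i j
  by_cases hi : i = k <;> by_cases hj : j = k
  all_goals
    simp only [invStep, Matrix.add_apply, of_apply, vecMulVec_apply, col_apply, Pi.sub_apply,
      Pi.single_apply, updateRow_apply, if_true, if_false, hi, hj]
    field_simp
    ring

lemma invStep_mul_updateRow (N E : Matrix ι ι ℝ) (k : ι) (hk : N k k ≠ 0) :
    invStep N k * E.updateRow k ((N * E) k) = (N * E).updateRow k (E k) := by
  have hE : E.updateRow k ((N * E) k) = (1 : Matrix ι ι ℝ).updateRow k (N k) * E := by
    rw [updateRow_mul, Matrix.one_mul, mul_apply_eq_vecMul]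
  have hNE : (N * E).updateRow k (E k) = N.updateRow k (Pi.single k 1) * E := by
    rw [updateRow_mul, single_one_vecMul]
    rfl
  rw [hE, hNE, ← Matrix.mul_assoc, invStep_mul_updateRow_one N k hk]

lemma invStep_mul_piecewiseRows_insert (M N : Matrix ι ι ℝ) (hM : allPrincipalInvertible M)
    {s : Finset ι} {k : ι} (hk : k ∉ s) (hN : N * piecewiseRows s M 1 = piecewiseRows s 1 M) :
    invStep N k * piecewiseRows (insert k s) M 1 = piecewiseRows (insert k s) 1 M := by
  have hE : piecewiseRows (insert k s) M 1
      = (piecewiseRows s M 1).updateRow k ((N * piecewiseRows s M 1) k) := by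
    rw [hN, piecewiseRows_insert, piecewiseRows_of_notMem s 1 M hk]
  have hF : piecewiseRows (insert k s) 1 M
      = (N * piecewiseRows s M 1).updateRow k (piecewiseRows s M 1 k) := by
    rw [hN, piecewiseRows_insert, piecewiseRows_of_notMem s M 1 hk]
  have hpivot : N k k ≠ 0 := by
    have := hM (insert k s)
    rw [← det_piecewiseRows_one, hE, det_updateRow_mul_row] at this
    exact left_ne_zero_of_mul this
  rw [hE, hF, invStep_mul_updateRow N _ k hpivot]

theorem invList_mul_piecewiseRows (M : Matrix ι ι ℝ) (hM : allPrincipalInvertible M)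
    (l : List ι) (hl : l.Nodup) :
    invList l M * piecewiseRows l.toFinset M 1 = piecewiseRows l.toFinset 1 M := by
  induction l using List.reverseRecOn with
  | nil => simp [invList]
  | append_singleton l k ih =>
    rw [List.nodup_append_comm, List.singleton_append, List.nodup_cons] at hl
    rw [show (l ++ [k]).toFinset = insert k l.toFinset by simp, invList, List.foldl_append]
    exact invStep_mul_piecewiseRows_insert M _ hM (by simpa using hl.1) (ih hl.2)

end Sweep

/-- partial inversion of a 2×2 block matrix with respect to the first
block `a` of the partition yields the blocks
`(M_aa⁻¹, -M_aa⁻¹ M_ab; M_ba M_aa⁻¹, M_bb - M_ba M_aa⁻¹ M_ab)`. -/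
theorem invList_blocks {α β : Type*} [Fintype α] [Fintype β] [DecidableEq α] [DecidableEq β]
    (M : Matrix (α ⊕ β) (α ⊕ β) ℝ) (hM : allPrincipalInvertible M)
    (hMaa : IsUnit M.toBlocks₁₁.det)
    (la : List (α ⊕ β)) (hna : la.Nodup)
    (hmem : ∀ x : α ⊕ β, x ∈ la ↔ ∃ y : α, x = Sum.inl y) :
    invList la M =
      Matrix.fromBlocks
        (M.toBlocks₁₁)⁻¹
        (-((M.toBlocks₁₁)⁻¹ * M.toBlocks₁₂))
        (M.toBlocks₂₁ * (M.toBlocks₁₁)⁻¹)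
        (M.toBlocks₂₂ - M.toBlocks₂₁ * (M.toBlocks₁₁)⁻¹ * M.toBlocks₁₂) := by
  have hla : la.toFinset = Finset.univ.map .inl := by
    ext x
    simp [hmem, eq_comm]
  have h := invList_mul_piecewiseRows M hM la hna
  rw [hla, piecewiseRows_inl_self_one, piecewiseRows_inl_one_self] at h
  exact eq_fromBlocks_of_mul_fromBlocks hMaa h
end

section
/- Partial closure on sets of indices is commutative: for disjoint sets a, b of indices of a square binary matrix 𝓜 with ones on the diagonal, zer_a (zer_b 𝓜) = zer_b (zer_a 𝓜). -/
/-!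
Any two single-index closures commute: for `i, j ∉ {a, b}` both `zer_b ∘ zer_a` and
`zer_a ∘ zer_b` add to `𝓜 i j` exactly the paths `i → a → j`, `i → b → j`, `i → a → b → j`
and `i → b → a → j`, and the rows and columns `a`, `b` are checked likewise. So `zerStep` is
right-commutative, a fold of it is invariant under permuting the index list, and
`lb ++ la` is a permutation of `la ++ lb`.
-/

/-- Partial closure of a binary (Bool-valued) square matrix with respect to index `k`. -/
def zerStep {ι : Type*} [DecidableEq ι] (M : Matrix ι ι Bool) (k : ι) : Matrix ι ι Bool :=
  Matrix.of fun i j =>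
    if i = k then (if j = k then true else M k j)
    else if j = k then M i k
    else M i j || (M i k && M k j)

/-- Partial closure with respect to a sequence of indices, applied in order. -/
def zerList {ι : Type*} [DecidableEq ι] (l : List ι) (M : Matrix ι ι Bool) : Matrix ι ι Bool :=
  l.foldl zerStep M

theorem zerStep_right_comm {ι : Type*} [DecidableEq ι] (M : Matrix ι ι Bool) (a b : ι) :
    zerStep (zerStep M a) b = zerStep (zerStep M b) a := by
  ext i j
  simp only [zerStep, Matrix.of_apply]
  split_ifs <;> subst_vars <;> grind

instance {ι : Type*} [DecidableEq ι] : RightCommutative (zerStep (ι := ι)) :=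
  ⟨zerStep_right_comm⟩

theorem zerList_comm_general {ι : Type*} [DecidableEq ι]
    (M : Matrix ι ι Bool)
    (la lb : List ι) :
    zerList la (zerList lb M) = zerList lb (zerList la M) := by
  simp only [zerList, ← List.foldl_append]
  exact List.perm_append_comm.foldl_eq M

/-- partial closure on disjoint index sets commutes. -/
theorem zerList_comm {ι : Type*} [Fintype ι] [DecidableEq ι]
    (M : Matrix ι ι Bool) (hdiag : ∀ i, M i i = true)
    (la lb : List ι) (hna : la.Nodup) (hnb : lb.Nodup)
    (hdisj : Disjoint la.toFinset lb.toFinset) :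
    zerList la (zerList lb M) = zerList lb (zerList la M) :=
  zerList_comm_general M la lb
end

section
/- Partial closure is idempotent and absorbs overlaps: for disjoint index sets a, b, c, zer_{a∪b}(zer_{b∪c} 𝓜) = zer_{a∪b∪c} 𝓜 for any square binary matrix 𝓜 with ones on the diagonal. -/
section Aux

variable {ι : Type*} [DecidableEq ι]

/-- Reachability from `i` to `j` via walks whose intermediate vertices lie in `S`. -/
inductive Reach (M : Matrix ι ι Bool) (S : Set ι) : ι → ι → Prop
  | base {i j : ι} : M i j = true → Reach M S i j
  | step {i k j : ι} : M i k = true → k ∈ S → Reach M S k j → Reach M S i j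

lemma Reach.mono {M : Matrix ι ι Bool} {S T : Set ι} (hST : S ⊆ T) :
    ∀ {i j : ι}, Reach M S i j → Reach M T i j := by
  intro i j h
  induction h with
  | base h => exact .base h
  | step h hk _ ih => exact .step h (hST hk) ih

lemma Reach.trans {M : Matrix ι ι Bool} {S : Set ι} {i k j : ι}
    (h1 : Reach M S i k) (hk : k ∈ S) (h2 : Reach M S k j) : Reach M S i j := by
  induction h1 with
  | base h => exact .step h hk h2
  | step h hm _ ih => exact .step h hm (ih hk h2)

lemma Reach.trans_edge {M N : Matrix ι ι Bool} {S : Set ι}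
    (hMN : ∀ a b : ι, M a b = true → N a b = true) {i k j : ι}
    (h1 : Reach M S i k) (h2 : ∀ {a : ι}, M a k = true → Reach N S a j) :
    Reach N S i j := by
  induction h1 with
  | base h => exact h2 h
  | step h hm _ ih => exact .step (hMN _ _ h) hm (ih @h2)

lemma reach_insert {M : Matrix ι ι Bool} {S : Set ι} {k i j : ι} :
    Reach M (insert k S) i j ↔ Reach M S i j ∨ (Reach M S i k ∧ Reach M S k j) := by
  constructor
  · intro h
    induction h with
    | base h => exact .inl (.base h)
    | step h hm _ ih =>
      rcases Set.mem_insert_iff.mp hm with rfl | hm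
      · rcases ih with h' | ⟨_, h2⟩
        · exact .inr ⟨.base h, h'⟩
        · exact .inr ⟨.base h, h2⟩
      · rcases ih with h' | ⟨h1, h2⟩
        · exact .inl (.step h hm h')
        · exact .inr ⟨.step h hm h1, h2⟩
  · rintro (h | ⟨h1, h2⟩)
    · exact h.mono (Set.subset_insert k S)
    · exact Reach.trans (h1.mono (Set.subset_insert k S)) (Set.mem_insert k S)
        (h2.mono (Set.subset_insert k S))

lemma zerStep_apply {M : Matrix ι ι Bool} (hdiag : ∀ i, M i i = true) (k i j : ι) :
    zerStep M k i j = (M i j || (M i k && M k j)) := by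
  simp only [zerStep, Matrix.of_apply]
  split_ifs with h1 h2 h2
  · subst h1; subst h2; simp [hdiag]
  · subst h1; simp [hdiag]
  · subst h2; simp [hdiag]
  · rfl

lemma zerStep_diag {M : Matrix ι ι Bool} (hdiag : ∀ i, M i i = true) (k i : ι) :
    zerStep M k i i = true := by
  rw [zerStep_apply hdiag]
  simp [hdiag]

lemma reach_zerStep {M : Matrix ι ι Bool} (hdiag : ∀ i, M i i = true) {k : ι} {S : Set ι}
    {i j : ι} : Reach (zerStep M k) S i j ↔ Reach M (insert k S) i j := by
  constructor
  · intro h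
    induction h with
    | base h =>
      rw [zerStep_apply hdiag, Bool.or_eq_true, Bool.and_eq_true] at h
      rcases h with h | ⟨h1, h2⟩
      · exact .base h
      · exact .step h1 (Set.mem_insert k S) (.base h2)
    | step h hm _ ih =>
      rw [zerStep_apply hdiag, Bool.or_eq_true, Bool.and_eq_true] at h
      rcases h with h | ⟨h1, h2⟩
      · exact .step h (Set.mem_insert_of_mem _ hm) ih
      · exact .step h1 (Set.mem_insert k S) (.step h2 (Set.mem_insert_of_mem _ hm) ih)
  · intro h
    have hMN : ∀ a b : ι, M a b = true → zerStep M k a b = true := by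
      intro a b h; rw [zerStep_apply hdiag]; simp [h]
    have mono_edge : ∀ {a b : ι}, Reach M S a b → Reach (zerStep M k) S a b := by
      intro a b h
      induction h with
      | base h => exact .base (hMN _ _ h)
      | step h hm _ ih => exact .step (hMN _ _ h) hm ih
    rcases reach_insert.mp h with h | ⟨h1, h2⟩
    · exact mono_edge h
    · -- combine paths i → k and k → j through k
      have key : ∀ {a : ι}, M a k = true → Reach (zerStep M k) S a j := by
        intro a hak
        cases h2 with
        | base h => exact .base (by rw [zerStep_apply hdiag]; simp [hak, h])
        | step h hm h' =>
          exact .step (by rw [zerStep_apply hdiag]; simp [hak, h]) hm (mono_edge h')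
      exact Reach.trans_edge hMN h1 key

lemma zerList_diag (l : List ι) {M : Matrix ι ι Bool} (hdiag : ∀ i, M i i = true) (i : ι) :
    zerList l M i i = true := by
  induction l generalizing M with
  | nil => exact hdiag i
  | cons k l ih => exact ih (zerStep_diag hdiag k)

lemma zerList_reach (l : List ι) {M : Matrix ι ι Bool} (hdiag : ∀ i, M i i = true) {i j : ι} :
    zerList l M i j = true ↔ Reach M {x | x ∈ l} i j := by
  induction l generalizing M i j with
  | nil =>
    constructor
    · intro h; exact .base h
    · intro h
      cases h with
      | base h => exact h
      | step _ hm _ => simp at hm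
  | cons k l ih =>
    show zerList l (zerStep M k) i j = true ↔ _
    rw [ih (zerStep_diag hdiag k), reach_zerStep hdiag]
    have : insert k {x | x ∈ l} = {x | x ∈ k :: l} := by
      ext x; simp
    rw [this]

lemma reach_comp {M N : Matrix ι ι Bool} {T S : Set ι}
    (hN : ∀ i j, N i j = true ↔ Reach M T i j) {i j : ι} :
    Reach N S i j ↔ Reach M (S ∪ T) i j := by
  constructor
  · intro h
    induction h with
    | base h => exact ((hN _ _).mp h).mono Set.subset_union_right
    | step h hm _ ih =>
      exact Reach.trans (((hN _ _).mp h).mono Set.subset_union_right)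
        (Set.mem_union_left _ hm) ih
  · intro h
    induction h with
    | base h => exact .base ((hN _ _).mpr (.base h))
    | step h hm _ ih =>
      rcases hm with hm | hm
      · exact .step ((hN _ _).mpr (.base h)) hm ih
      · cases ih with
        | base h' => exact .base ((hN _ _).mpr (Reach.trans (.base h) hm ((hN _ _).mp h')))
        | step h' hm' rest =>
          exact .step ((hN _ _).mpr (Reach.trans (.base h) hm ((hN _ _).mp h'))) hm' rest

end Aux

/-- partial closure absorbs overlaps:
`zer_{a∪b}(zer_{b∪c} M) = zer_{a∪b∪c} M` for disjoint `a`, `b`, `c`. -/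
theorem zerList_absorb {ι : Type*} [Fintype ι] [DecidableEq ι]
    (M : Matrix ι ι Bool) (hdiag : ∀ i, M i i = true)
    (la lb lc : List ι) (hna : la.Nodup) (hnb : lb.Nodup) (hnc : lc.Nodup)
    (hab : Disjoint la.toFinset lb.toFinset)
    (hbc : Disjoint lb.toFinset lc.toFinset)
    (hac : Disjoint la.toFinset lc.toFinset) :
    zerList (la ++ lb) (zerList (lb ++ lc) M) = zerList (la ++ lb ++ lc) M := by
  have hd1 : ∀ i, zerList (lb ++ lc) M i i = true := zerList_diag _ hdiag
  have hN : ∀ i j, zerList (lb ++ lc) M i j = true ↔ Reach M {x | x ∈ lb ++ lc} i j :=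
    fun i j => zerList_reach _ hdiag
  have hset : ({x | x ∈ la ++ lb} ∪ {x | x ∈ lb ++ lc} : Set ι) = {x | x ∈ la ++ lb ++ lc} := by
    ext x; simp [List.mem_append]; tauto
  funext i j
  have h1 : zerList (la ++ lb) (zerList (lb ++ lc) M) i j = true ↔
      Reach M {x | x ∈ la ++ lb ++ lc} i j := by
    rw [zerList_reach _ hd1, reach_comp hN, hset]
  have h2 : zerList (la ++ lb ++ lc) M i j = true ↔
      Reach M {x | x ∈ la ++ lb ++ lc} i j := zerList_reach _ hdiag
  exact Bool.eq_iff_iff.mpr (h1.trans h2.symm)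
end

section
/- Partial closure of the adjacency-type edge matrix 𝓜 of a directed graph with respect to the full index set V equals the edge matrix of the transitive closure of the graph: (zer_V 𝓜)_{ij} = 1 if and only if i = j or there is a directed path from j to i in the graph. -/
/-- Reachability via a path whose intermediate vertices all lie in `S`. -/
inductive Reach_s8 {ι : Type*} (E : ι → ι → Prop) (S : Set ι) : ι → ι → Prop
  | base {a b} : E a b → Reach_s8 E S a b
  | trans {a k b} : k ∈ S → Reach_s8 E S a k → Reach_s8 E S k b → Reach_s8 E S a b

lemma reach_mono {ι : Type*} {E : ι → ι → Prop} {S T : Set ι} (h : S ⊆ T) {a b : ι} :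
    Reach_s8 E S a b → Reach_s8 E T a b := by
  intro hr
  induction hr with
  | base h' => exact .base h'
  | trans hk _ _ ih1 ih2 => exact .trans (h hk) ih1 ih2

lemma reach_insert_s8 {ι : Type*} {E : ι → ι → Prop} {S : Set ι} {k a b : ι} :
    Reach_s8 E (insert k S) a b ↔ Reach_s8 E S a b ∨ (Reach_s8 E S a k ∧ Reach_s8 E S k b) := by
  constructor
  · intro h
    induction h with
    | base h => exact .inl (.base h)
    | trans hm h1 h2 ih1 ih2 =>
      rcases hm with rfl | hm
      · refine .inr ⟨?_, ?_⟩
        · rcases ih1 with h | ⟨h, _⟩ <;> exact h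
        · rcases ih2 with h | ⟨_, h⟩ <;> exact h
      · rcases ih1 with h1' | ⟨h1', h1''⟩ <;> rcases ih2 with h2' | ⟨h2', h2''⟩
        · exact .inl (.trans hm h1' h2')
        · exact .inr ⟨.trans hm h1' h2', h2''⟩
        · exact .inr ⟨h1', .trans hm h1'' h2'⟩
        · exact .inr ⟨h1', h2''⟩
  · rintro (h | ⟨h1, h2⟩)
    · exact reach_mono (Set.subset_insert _ _) h
    · exact .trans (Set.mem_insert _ _) (reach_mono (Set.subset_insert _ _) h1)
        (reach_mono (Set.subset_insert _ _) h2)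

lemma reach_empty {ι : Type*} {E : ι → ι → Prop} {a b : ι} :
    Reach_s8 E (∅ : Set ι) a b ↔ E a b := by
  constructor
  · intro h
    induction h with
    | base h => exact h
    | trans hk _ _ _ _ => exact absurd hk (Set.notMem_empty _)
  · exact .base

lemma reach_univ {ι : Type*} {E : ι → ι → Prop} {a b : ι} :
    Reach_s8 E (Set.univ : Set ι) a b ↔ Relation.TransGen E a b := by
  constructor
  · intro h
    induction h with
    | base h => exact .single h
    | trans _ _ _ ih1 ih2 => exact ih1.trans ih2
  · intro h
    induction h with
    | single h => exact .base h
    | tail _ h ih => exact .trans (Set.mem_univ _) ih (.base h)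

lemma zerStep_spec {ι : Type*} [DecidableEq ι] {E : ι → ι → Prop} {S : Set ι}
    {M : Matrix ι ι Bool} (k : ι)
    (h : ∀ i j, M i j = true ↔ i = j ∨ Reach_s8 E S j i) (i j : ι) :
    zerStep M k i j = true ↔ i = j ∨ Reach_s8 E (insert k S) j i := by
  simp only [zerStep, Matrix.of_apply]
  by_cases hik : i = k
  · by_cases hjk : j = k
    · rw [if_pos hik, if_pos hjk]
      simp [hik.trans hjk.symm]
    · rw [if_pos hik, if_neg hjk, h, reach_insert_s8]
      subst hik
      tauto
  · by_cases hjk : j = k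
    · rw [if_neg hik, if_pos hjk, h, reach_insert_s8]
      subst hjk
      tauto
    · rw [if_neg hik, if_neg hjk]
      simp only [Bool.or_eq_true, Bool.and_eq_true, h, reach_insert_s8]
      tauto

lemma zerList_spec {ι : Type*} [DecidableEq ι] {E : ι → ι → Prop} (l : List ι) :
    ∀ (S : Set ι) (M : Matrix ι ι Bool),
      (∀ i j, M i j = true ↔ i = j ∨ Reach_s8 E S j i) →
      ∀ i j, zerList l M i j = true ↔ i = j ∨ Reach_s8 E (S ∪ {x | x ∈ l}) j i := by
  induction l with
  | nil =>
    intro S M h i j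
    simpa [zerList] using h i j
  | cons k l ih =>
    intro S M h i j
    have hset : (insert k S ∪ {x | x ∈ l} : Set ι) = S ∪ {x | x ∈ k :: l} := by
      ext x
      simp [Set.mem_insert_iff]
      tauto
    have := ih (insert k S) (zerStep M k) (zerStep_spec k h) i j
    rw [hset] at this
    simpa [zerList, List.foldl_cons] using this

/-- partial closure of the edge matrix of a directed graph with respect
to all indices is the edge matrix of the transitive closure: for the binary matrix
with `M i j = 1` iff there is an edge `j → i` or `i = j`, the fully closed matrix
has an `(i,j)`-one iff `i = j` or there is a directed path from `j` to `i`. -/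
theorem zerList_transClosure {ι : Type*} [Fintype ι] [DecidableEq ι]
    (E : ι → ι → Prop) [DecidableRel E]
    (l : List ι) (hnl : l.Nodup) (hall : ∀ i : ι, i ∈ l) (i j : ι) :
    zerList l (Matrix.of fun i j => decide (i = j ∨ E j i)) i j = true ↔
      i = j ∨ Relation.TransGen E j i := by
  have h0 : ∀ i j : ι, (Matrix.of fun i j => decide (i = j ∨ E j i)) i j = true ↔
      i = j ∨ Reach_s8 E (∅ : Set ι) j i := by
    intro i j
    simp [reach_empty]
  have := zerList_spec (E := E) l ∅ _ h0 i j
  have hset : ((∅ : Set ι) ∪ {x | x ∈ l}) = Set.univ := by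
    ext x; simp [hall x]
  rw [hset, reach_univ] at this
  exact this
end

section
/- For a binary square matrix 𝓐_{aa} (upper triangular with ones on the diagonal, representing a DAG on node set a of size d_a), the matrix In[(k𝓘 − 𝓐_{aa})⁻¹] with k = d_a + 1 has an (i,j)-one if and only if i = j or node j is an ancestor of node i in the DAG, i.e., it equals the edge matrix of the transitive closure. -/
section Aux
variable {d : ℕ} (N : Matrix (Fin d) (Fin d) ℝ)

lemma aux_pow_nonneg (hpos : ∀ i j, 0 ≤ N i j) :
    ∀ m i j, 0 ≤ (N ^ m) i j := by
  intro m
  induction m with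
  | zero =>
    intro i j
    simp [Matrix.one_apply]
    split <;> norm_num
  | succ m ih =>
    intro i j
    rw [pow_succ', Matrix.mul_apply]
    exact Finset.sum_nonneg fun k _ => mul_nonneg (hpos i k) (ih k j)

lemma aux_pow_bound (htri : ∀ i j : Fin d, N i j ≠ 0 → (i : ℕ) < j) :
    ∀ m i j, (N ^ m) i j ≠ 0 → (i : ℕ) + m ≤ j := by
  intro m
  induction m with
  | zero =>
    intro i j h
    simp [Matrix.one_apply] at h
    subst h
    simp
  | succ m ih =>
    intro i j h
    rw [pow_succ', Matrix.mul_apply] at h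
    obtain ⟨k, -, hk⟩ := Finset.exists_ne_zero_of_sum_ne_zero h
    have h1 := htri i k (left_ne_zero_of_mul hk)
    have h2 := ih k j (right_ne_zero_of_mul hk)
    omega

/-- From a nonzero power entry, produce a path. -/
lemma aux_pow_path :
    ∀ m i j, (N ^ m) i j ≠ 0 →
      i = j ∨ Relation.TransGen (fun x y : Fin d => N y x ≠ 0) j i := by
  intro m
  induction m with
  | zero =>
    intro i j h
    simp [Matrix.one_apply] at h
    exact Or.inl h
  | succ m ih =>
    intro i j h
    rw [pow_succ', Matrix.mul_apply] at h
    obtain ⟨k, -, hk⟩ := Finset.exists_ne_zero_of_sum_ne_zero h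
    have h1 : N i k ≠ 0 := left_ne_zero_of_mul hk
    rcases ih k j (right_ne_zero_of_mul hk) with rfl | hp
    · exact Or.inr (Relation.TransGen.single h1)
    · exact Or.inr (hp.tail h1)

/-- From a path, produce a nonzero power entry with length bound. -/
lemma aux_path_pow (hpos : ∀ i j, 0 ≤ N i j)
    (htri : ∀ i j : Fin d, N i j ≠ 0 → (i : ℕ) < j) {i j : Fin d}
    (h : Relation.TransGen (fun x y : Fin d => N y x ≠ 0) j i) :
    ∃ m, (i : ℕ) + m ≤ (j : ℕ) ∧ (N ^ m) i j ≠ 0 := by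
  induction h with
  | single h =>
    refine ⟨1, ?_, by simpa using h⟩
    have := htri _ _ h
    omega
  | @tail b c hab h2 ih =>
    obtain ⟨m, hm, hne⟩ := ih
    refine ⟨m + 1, ?_, ?_⟩
    · have := htri _ _ h2
      omega
    · rw [pow_succ', Matrix.mul_apply]
      have hterm : N c b * (N ^ m) b j ≠ 0 := mul_ne_zero h2 hne
      intro hs
      rw [Finset.sum_eq_zero_iff_of_nonneg
        (fun k _ => mul_nonneg (hpos c k) (aux_pow_nonneg N hpos m k j))] at hs
      exact hterm (hs b (Finset.mem_univ b))

end Aux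

/-- for a binary upper-triangular matrix `A` with unit diagonal
(the transpose-adjacency matrix of a DAG on `Fin d` plus diagonal ones), the
indicator matrix `In[(k·I − A)⁻¹]` with `k = d + 1` has an `(i,j)`-one iff
`i = j` or `j` is an ancestor of `i`, i.e. there is a direction-preserving path
from `j` to `i` along arrows `y ← x` (where `A y x = 1`). -/
theorem indicator_inverse_transitive_closure {d : ℕ}
    (A : Matrix (Fin d) (Fin d) ℝ)
    (hbin : ∀ i j, A i j = 0 ∨ A i j = 1)
    (hdiag : ∀ i, A i i = 1)
    (htri : A.BlockTriangular id)
    (i j : Fin d) :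
    ((((d : ℝ) + 1) • (1 : Matrix (Fin d) (Fin d) ℝ) - A)⁻¹ i j ≠ 0) ↔
      (i = j ∨ Relation.TransGen (fun x y : Fin d => A y x = 1 ∧ x ≠ y) j i) := by
  have hd : 0 < d := i.pos
  have hd0 : (d : ℝ) ≠ 0 := Nat.cast_ne_zero.mpr hd.ne'
  set N : Matrix (Fin d) (Fin d) ℝ := A - 1 with hN
  -- basic facts about N
  have hNapp : ∀ x y : Fin d, N x y = A x y - (1 : Matrix (Fin d) (Fin d) ℝ) x y :=
    fun x y => rfl
  have hNdiag : ∀ x, N x x = 0 := by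
    intro x; rw [hNapp, hdiag, Matrix.one_apply_eq]; ring
  have hNoff : ∀ x y, x ≠ y → N x y = A x y := by
    intro x y hxy; rw [hNapp, Matrix.one_apply_ne hxy, sub_zero]
  have hNpos : ∀ x y, 0 ≤ N x y := by
    intro x y
    rcases eq_or_ne x y with rfl | hxy
    · rw [hNdiag]
    · rw [hNoff x y hxy]
      rcases hbin x y with h | h <;> simp [h]
  have hNtri : ∀ x y : Fin d, N x y ≠ 0 → (x : ℕ) < y := by
    intro x y hne
    rcases eq_or_ne x y with rfl | hxy
    · exact absurd (hNdiag x) hne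
    · rw [hNoff x y hxy] at hne
      by_contra hlt
      exact hne (htri (by simp; omega))
  -- the relation in terms of N
  have hrel : (fun x y : Fin d => A y x = 1 ∧ x ≠ y) = (fun x y : Fin d => N y x ≠ 0) := by
    funext x y
    simp only [eq_iff_iff]
    constructor
    · rintro ⟨h1, h2⟩
      rw [hNoff y x (Ne.symm h2), h1]; norm_num
    · intro h
      have hyx : y ≠ x := fun he => h (he ▸ hNdiag y)
      rw [hNoff y x hyx] at h
      rcases hbin y x with h' | h'
      · exact absurd h' h
      · exact ⟨h', Ne.symm hyx⟩
  -- rewrite the matrix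
  have hM : (((d : ℝ) + 1) • (1 : Matrix (Fin d) (Fin d) ℝ) - A)
      = (d : ℝ) • (1 : Matrix (Fin d) (Fin d) ℝ) - N := by
    rw [hN, add_smul, one_smul]; abel
  -- N ^ d = 0
  have hNd : N ^ d = 0 := by
    ext x y
    by_contra h
    have := aux_pow_bound N hNtri d x y h
    have := y.isLt
    omega
  -- the inverse formula
  set c : ℝ := (d : ℝ)⁻¹ with hc
  set S : Matrix (Fin d) (Fin d) ℝ := ∑ m ∈ Finset.range d, c ^ (m + 1) • N ^ m with hS
  have hmul : ((d : ℝ) • (1 : Matrix (Fin d) (Fin d) ℝ) - N) * S = 1 := by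
    rw [hS, Finset.mul_sum]
    have : ∀ m ∈ Finset.range d,
        ((d : ℝ) • (1 : Matrix (Fin d) (Fin d) ℝ) - N) * (c ^ (m + 1) • N ^ m)
          = c ^ m • N ^ m - c ^ (m + 1) • N ^ (m + 1) := by
      intro m _
      rw [sub_mul, Matrix.smul_mul, one_mul, Matrix.mul_smul, smul_smul, ← pow_succ']
      have hsc : (d : ℝ) * c ^ (m + 1) = c ^ m := by
        rw [hc, pow_succ', ← mul_assoc, mul_inv_cancel₀ hd0, one_mul]
      rw [hsc]
    rw [Finset.sum_congr rfl this, Finset.sum_range_sub' (fun m => c ^ m • N ^ m), hNd]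
    simp
  have hinv : (((d : ℝ) + 1) • (1 : Matrix (Fin d) (Fin d) ℝ) - A)⁻¹ = S := by
    rw [hM]
    exact Matrix.inv_eq_right_inv hmul
  rw [hinv, hrel]
  -- entrywise characterization
  have hentry : S i j = ∑ m ∈ Finset.range d, c ^ (m + 1) * (N ^ m) i j := by
    rw [hS]
    simp [Matrix.sum_apply]
  have hcpos : 0 < c := by
    rw [hc]; positivity
  rw [hentry]
  constructor
  · intro h
    obtain ⟨m, -, hm⟩ := Finset.exists_ne_zero_of_sum_ne_zero h
    exact aux_pow_path N m i j (right_ne_zero_of_mul hm)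
  · intro h
    have : ∃ m, m < d ∧ (N ^ m) i j ≠ 0 := by
      rcases h with rfl | hp
      · exact ⟨0, hd, by simp⟩
      · obtain ⟨m, hm, hne⟩ := aux_path_pow N hNpos hNtri hp
        exact ⟨m, by have := j.isLt; omega, hne⟩
    obtain ⟨m, hmd, hne⟩ := this
    intro hs
    rw [Finset.sum_eq_zero_iff_of_nonneg (fun k _ =>
      mul_nonneg (le_of_lt (pow_pos hcpos _)) (aux_pow_nonneg N hNpos k i j))] at hs
    exact (mul_ne_zero (pow_pos hcpos _).ne' hne) (hs m (Finset.mem_range.mpr hmd))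
end

section
/- Let Σ be a positive definite matrix partitioned by disjoint index sets. Then the matrix of least-squares regression coefficients satisfies the Cochran recursion Π_{a|b.cd} = Π_{a|b.c} − Π_{a|d.bc} Π_{d|b.c}. -/
variable {n : ℕ}

/-- The submatrix (block) of `S` with rows `x` and columns `y`. -/
def blk (S : Matrix (Fin n) (Fin n) ℝ) (x y : Finset (Fin n)) : Matrix x y ℝ :=
  Matrix.of fun i j => S i j

/-- The conditional covariance block `Σ_{xy|z} = Σ_{xy} − Σ_{xz} Σ_{zz}⁻¹ Σ_{zy}`. -/
noncomputable def condCov (S : Matrix (Fin n) (Fin n) ℝ) (x y z : Finset (Fin n)) :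
    Matrix x y ℝ :=
  blk S x y - blk S x z * (blk S z z)⁻¹ * blk S z y

/-- The partial regression coefficient matrix `Π_{x|y.z} = Σ_{xy|z} Σ_{yy|z}⁻¹`. -/
noncomputable def regCoef (S : Matrix (Fin n) (Fin n) ℝ) (x y z : Finset (Fin n)) :
    Matrix x y ℝ :=
  condCov S x y z * (condCov S y y z)⁻¹

/-!
Conditioning on `c ∪ d` is conditioning on `c` and then on `d`: the Schur-complement formula for
the inverse of a 2×2 block matrix gives `Σ_{xy|cd} = Σ_{xy|c} − Σ_{xd|c} Σ_{dd|c}⁻¹ Σ_{dy|c}`, and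
likewise with `b` in place of `d`. After this reduction every quantity is a block of the single
matrix `Σ_{··|c}`, and the recursion becomes an identity among these blocks, checked by multiplying
on the right by `Σ_{bb|cd}`. All the Schur complements involved are invertible because conditional
covariances of a positive definite matrix are again positive definite.
-/

open Matrix

theorem Matrix.fromCols_mul_inv_fromBlocks_mul_fromRows {l m p o α : Type*} [Fintype m]
    [Fintype p] [DecidableEq m] [DecidableEq p] [CommRing α] {A : Matrix m m α} {B : Matrix m p α}
    {C : Matrix p m α} {D : Matrix p p α} (hA : IsUnit A) (hD : IsUnit (D - C * A⁻¹ * B))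
    (X₁ : Matrix l m α) (X₂ : Matrix l p α) (Y₁ : Matrix m o α) (Y₂ : Matrix p o α) :
    fromCols X₁ X₂ * (fromBlocks A B C D)⁻¹ * fromRows Y₁ Y₂ =
      X₁ * A⁻¹ * Y₁ + (X₂ - X₁ * A⁻¹ * B) * (D - C * A⁻¹ * B)⁻¹ * (Y₂ - C * A⁻¹ * Y₁) := by
  let := hA.invertible
  let : Invertible (D - C * ⅟A * B) := by rw [invOf_eq_nonsing_inv]; exact hD.invertible
  let := fromBlocks₁₁Invertible A B C D
  rw [← invOf_eq_nonsing_inv (fromBlocks A B C D), invOf_fromBlocks₁₁_eq, fromCols_mul_fromBlocks,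
    fromCols_mul_fromRows]
  simp only [invOf_eq_nonsing_inv, Matrix.sub_mul, Matrix.mul_sub, Matrix.add_mul, Matrix.mul_add,
    Matrix.neg_mul, Matrix.mul_neg, Matrix.mul_assoc]
  abel

theorem Matrix.PosDef.schur_complement_of_fromBlocks₁₁ {m p R : Type*} [Fintype m] [Fintype p]
    [DecidableEq m] [CommRing R] [PartialOrder R] [StarRing R] [StarOrderedRing R]
    {A : Matrix m m R} (B : Matrix m p R) (D : Matrix p p R) (hA : A.PosDef) [Invertible A]
    (h : (fromBlocks A B Bᴴ D).PosDef) : (D - Bᴴ * A⁻¹ * B).PosDef := by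
  refine .of_dotProduct_mulVec_pos ((IsHermitian.fromBlocks₁₁ B D hA.1).mp h.1) fun x hx => ?_
  have hu : (-((A⁻¹ * B) *ᵥ x) ⊕ᵥ x) ≠ 0 := fun h0 => hx <| funext fun j => by
    simpa using congrFun h0 (Sum.inr j)
  have hpos := h.dotProduct_mulVec_pos hu
  rwa [dotProduct_mulVec, schur_complement_eq₁₁ B D _ _ hA.1, neg_add_cancel, dotProduct_zero,
    zero_add, ← dotProduct_mulVec] at hpos

section Blocks

variable {S : Matrix (Fin n) (Fin n) ℝ}

theorem blk_conjTranspose (hS : S.IsHermitian) (x y : Finset (Fin n)) :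
    (blk S x y)ᴴ = blk S y x := by
  ext i j
  exact hS.apply _ _

theorem fromBlocks_blk (x x' y y' : Finset (Fin n)) :
    fromBlocks (blk S x x') (blk S x y') (blk S y x') (blk S y y') =
      S.submatrix (Sum.elim (↑) (↑)) (Sum.elim (↑) (↑)) := by
  ext (i | i) (j | j) <;> rfl

theorem blk_posDef (hS : S.PosDef) (z : Finset (Fin n)) : (blk S z z).PosDef :=
  hS.submatrix Subtype.val_injective

theorem condCov_posDef (hS : S.PosDef) {y z : Finset (Fin n)} (h : Disjoint z y) :
    (condCov S y y z).PosDef := by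
  have hzz := blk_posDef hS z
  let := hzz.isUnit.invertible
  have hblocks : (fromBlocks (blk S z z) (blk S z y) (blk S z y)ᴴ (blk S y y)).PosDef := by
    rw [blk_conjTranspose hS.1, fromBlocks_blk]
    refine hS.submatrix (Subtype.val_injective.sumElim Subtype.val_injective fun i j hij => ?_)
    exact Finset.disjoint_left.mp h i.2 (hij ▸ j.2)
  have hschur := PosDef.schur_complement_of_fromBlocks₁₁ _ _ hzz hblocks
  rw [blk_conjTranspose hS.1] at hschur
  exact hschur

theorem blk_mul_inv_mul_blk_union {z₁ z₂ : Finset (Fin n)} (h : Disjoint z₁ z₂)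
    (x y : Finset (Fin n)) :
    blk S x (z₁ ∪ z₂) * (blk S (z₁ ∪ z₂) (z₁ ∪ z₂))⁻¹ * blk S (z₁ ∪ z₂) y =
      fromCols (blk S x z₁) (blk S x z₂) *
        (fromBlocks (blk S z₁ z₁) (blk S z₁ z₂) (blk S z₂ z₁) (blk S z₂ z₂))⁻¹ *
        fromRows (blk S z₁ y) (blk S z₂ y) := by
  set e := Equiv.Finset.union z₁ z₂ h
  have hcols : fromCols (blk S x z₁) (blk S x z₂) = (blk S x (z₁ ∪ z₂)).submatrix id e := by
    ext i (j | j) <;> rfl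
  have hrows : fromRows (blk S z₁ y) (blk S z₂ y) = (blk S (z₁ ∪ z₂) y).submatrix e id := by
    ext (i | i) j <;> rfl
  have hblocks : fromBlocks (blk S z₁ z₁) (blk S z₁ z₂) (blk S z₂ z₁) (blk S z₂ z₂) =
      (blk S (z₁ ∪ z₂) (z₁ ∪ z₂)).submatrix e e := by
    ext (i | i) (j | j) <;> rfl
  rw [hcols, hrows, hblocks, inv_submatrix_equiv, submatrix_mul_equiv, submatrix_mul_equiv,
    submatrix_id_id]

theorem condCov_union {z₁ z₂ : Finset (Fin n)} (h : Disjoint z₁ z₂) (h₁ : IsUnit (blk S z₁ z₁))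
    (h₂ : IsUnit (condCov S z₂ z₂ z₁)) (x y : Finset (Fin n)) :
    condCov S x y (z₁ ∪ z₂) =
      condCov S x y z₁ - condCov S x z₂ z₁ * (condCov S z₂ z₂ z₁)⁻¹ * condCov S z₂ y z₁ := by
  rw [condCov, blk_mul_inv_mul_blk_union h, fromCols_mul_inv_fromBlocks_mul_fromRows h₁ h₂,
    ← sub_sub]
  rfl

end Blocks

theorem Matrix.cochran_identity {ι₁ ι₂ ι₃ α : Type*} [Fintype ι₂] [Fintype ι₃] [DecidableEq ι₂]
    [DecidableEq ι₃] [CommRing α] {Sab : Matrix ι₁ ι₂ α} {Sad : Matrix ι₁ ι₃ α}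
    {Sbb : Matrix ι₂ ι₂ α} {Sbd : Matrix ι₂ ι₃ α} {Sdb : Matrix ι₃ ι₂ α} {Sdd : Matrix ι₃ ι₃ α}
    (hbb : IsUnit Sbb) (hdd : IsUnit Sdd) (hb : IsUnit (Sbb - Sbd * Sdd⁻¹ * Sdb))
    (hd : IsUnit (Sdd - Sdb * Sbb⁻¹ * Sbd)) :
    (Sab - Sad * Sdd⁻¹ * Sdb) * (Sbb - Sbd * Sdd⁻¹ * Sdb)⁻¹ =
      Sab * Sbb⁻¹ - (Sad - Sab * Sbb⁻¹ * Sbd) * (Sdd - Sdb * Sbb⁻¹ * Sbd)⁻¹ * (Sdb * Sbb⁻¹) := by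
  rw [isUnit_iff_isUnit_det] at hbb hdd hb hd
  set Qb := Sbb - Sbd * Sdd⁻¹ * Sdb
  set Qd := Sdd - Sdb * Sbb⁻¹ * Sbd
  have hswap : Sdb * Sbb⁻¹ * Qb = Qd * (Sdd⁻¹ * Sdb) := by
    simp only [Qb, Qd, Matrix.mul_sub, Matrix.sub_mul, Matrix.mul_assoc, nonsing_inv_mul _ hbb,
      mul_nonsing_inv_cancel_left _ _ hdd, Matrix.mul_one]
  have hmul : (Sab * Sbb⁻¹ - (Sad - Sab * Sbb⁻¹ * Sbd) * Qd⁻¹ * (Sdb * Sbb⁻¹)) * Qb =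
      Sab - Sad * Sdd⁻¹ * Sdb := by
    rw [Matrix.sub_mul, Matrix.mul_assoc _ (Sdb * Sbb⁻¹), hswap, Matrix.mul_assoc _ Qd⁻¹,
      nonsing_inv_mul_cancel_left _ _ hd]
    simp only [Qb, Matrix.mul_sub, Matrix.sub_mul, Matrix.mul_assoc, nonsing_inv_mul _ hbb,
      Matrix.mul_one]
    abel
  rw [← hmul, mul_nonsing_inv_cancel_right _ _ hb]

theorem cochran_recursion_general (S : Matrix (Fin n) (Fin n) ℝ) (hS : S.PosDef)
    (a b c d : Finset (Fin n))
    (hbc : Disjoint b c) (hbd : Disjoint b d) (hcd : Disjoint c d) :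
    regCoef S a b (c ∪ d) =
      regCoef S a b c - regCoef S a d (b ∪ c) * regCoef S d b c := by
  have hc := (blk_posDef hS c).isUnit
  have hb_c := (condCov_posDef hS hbc.symm).isUnit
  have hd_c := (condCov_posDef hS hcd).isUnit
  have hb_cd := (condCov_posDef hS (Finset.disjoint_union_left.mpr ⟨hbc.symm, hbd.symm⟩)).isUnit
  have hd_cb := (condCov_posDef hS (Finset.disjoint_union_left.mpr ⟨hcd, hbd⟩)).isUnit
  rw [condCov_union hcd hc hd_c] at hb_cd
  rw [condCov_union hbc.symm hc hb_c] at hd_cb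
  unfold regCoef
  rw [Finset.union_comm b c, condCov_union hcd hc hd_c, condCov_union hcd hc hd_c,
    condCov_union hbc.symm hc hb_c, condCov_union hbc.symm hc hb_c]
  exact cochran_identity hb_c hd_c hb_cd hd_cb

/-- Cochran recursion `Π_{a|b.cd} = Π_{a|b.c} − Π_{a|d.bc} Π_{d|b.c}`. -/
theorem cochran_recursion (S : Matrix (Fin n) (Fin n) ℝ) (hS : S.PosDef)
    (a b c d : Finset (Fin n))
    (hab : Disjoint a b) (hac : Disjoint a c) (had : Disjoint a d)
    (hbc : Disjoint b c) (hbd : Disjoint b d) (hcd : Disjoint c d) :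
    regCoef S a b (c ∪ d) =
      regCoef S a b c - regCoef S a d (b ∪ c) * regCoef S d b c :=
  cochran_recursion_general S hS a b c d hbc hbd hcd
end

section
/- Decomposition for linear independencies: for a positive definite matrix Σ partitioned by disjoint sets a, b, c, d, if Π_{a|bc.d} = 0 then Π_{a|b.d} = 0. -/
variable {n : ℕ}

/-!
Since `Π_{a|bc.d} = Σ_{a,bc|d} Σ_{bc,bc|d}⁻¹` and `Σ_{bc,bc|d}` is invertible (its determinant is
the ratio `det Σ_{bc∪d} / det Σ_{dd}` of two principal minors of `Σ`, by the Schur complement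
formula), the hypothesis says `Σ_{a,bc|d} = 0`. Its columns indexed by `b` form `Σ_{ab|d}`,
hence `Π_{a|b.d} = Σ_{ab|d} Σ_{bb|d}⁻¹ = 0`.
-/

open Matrix

variable {S : Matrix (Fin n) (Fin n) ℝ} {x y y' z : Finset (Fin n)}

lemma fromBlocks_blk_eq_submatrix :
    fromBlocks (blk S z z) (blk S z y) (blk S y z) (blk S y y) =
      S.submatrix (Sum.elim (↑) (↑)) (Sum.elim (↑) (↑)) := by
  ext (i | i) (j | j) <;> rfl

lemma det_fromBlocks_blk (hz : IsUnit (blk S z z).det) :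
    (fromBlocks (blk S z z) (blk S z y) (blk S y z) (blk S y y)).det =
      (blk S z z).det * (condCov S y y z).det := by
  have := invertibleOfIsUnitDet _ hz
  rw [det_fromBlocks₁₁, invOf_eq_nonsing_inv, condCov]

lemma isUnit_det_condCov (hS : S.PosDef) (hyz : Disjoint y z) :
    IsUnit (condCov S y y z).det := by
  have hz : IsUnit (blk S z z).det :=
    (hS.submatrix Subtype.coe_injective).det_pos.ne'.isUnit
  have hzy : Function.Injective (Sum.elim ((↑) : z → Fin n) ((↑) : y → Fin n)) :=
    Subtype.coe_injective.sumElim Subtype.coe_injective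
      fun i j hij => hyz.forall_ne_finset j.2 i.2 hij.symm
  have hblocks : (fromBlocks (blk S z z) (blk S z y) (blk S y z) (blk S y y)).det ≠ 0 := by
    rw [fromBlocks_blk_eq_submatrix]
    exact (hS.submatrix hzy).det_pos.ne'
  rw [det_fromBlocks_blk hz] at hblocks
  exact (right_ne_zero_of_mul hblocks).isUnit

lemma condCov_submatrix_of_subset (h : y' ⊆ y) :
    (condCov S x y z).submatrix id (fun j : y' => ⟨j, h j.2⟩) = condCov S x y' z :=
  rfl

lemma regCoef_eq_zero_iff (hy : IsUnit (condCov S y y z).det) :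
    regCoef S x y z = 0 ↔ condCov S x y z = 0 := by
  refine ⟨fun h => ?_, fun h => by rw [regCoef, h, Matrix.zero_mul]⟩
  calc condCov S x y z = regCoef S x y z * condCov S y y z :=
        (nonsing_inv_mul_cancel_right _ _ hy).symm
    _ = 0 := by rw [h, Matrix.zero_mul]

theorem regCoef_decomposition_general (S : Matrix (Fin n) (Fin n) ℝ) (hS : S.PosDef)
    (a b c d : Finset (Fin n))
    (hbd : Disjoint b d) (hcd : Disjoint c d)
    (h : regCoef S a (b ∪ c) d = 0) :
    regCoef S a b d = 0 := by
  have hunit := isUnit_det_condCov hS (Finset.disjoint_union_left.2 ⟨hbd, hcd⟩)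
  have hcov : condCov S a (b ∪ c) d = 0 := (regCoef_eq_zero_iff hunit).1 h
  rw [regCoef, ← condCov_submatrix_of_subset Finset.subset_union_left, hcov, submatrix_zero,
    Pi.zero_apply, Pi.zero_apply, Matrix.zero_mul]

/-- decomposition, `Π_{a|bc.d} = 0` implies `Π_{a|b.d} = 0`. -/
theorem regCoef_decomposition (S : Matrix (Fin n) (Fin n) ℝ) (hS : S.PosDef)
    (a b c d : Finset (Fin n))
    (hab : Disjoint a b) (hac : Disjoint a c) (had : Disjoint a d)
    (hbc : Disjoint b c) (hbd : Disjoint b d) (hcd : Disjoint c d)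
    (h : regCoef S a (b ∪ c) d = 0) :
    regCoef S a b d = 0 :=
  regCoef_decomposition_general S hS a b c d hbd hcd h
end

section
/- In a linear triangular system A Y = ε with cov(ε) = Δ diagonal, if B = inv_a Ã denotes A (reordered compatibly with the partition (a,b)) partially inverted on a, then the equations in Y_b obtained by eliminating Y_a are B_{bb} Y_b = η_b with η_b = ε_b − B_{ba} ε_a, and cov(ε_a, η_b) = (Δ_{aa}, −Δ_{aa}B_{ba}ᵀ; −B_{ba}Δ_{aa}, Δ_{bb} + B_{ba}Δ_{aa}B_{ba}ᵀ). -/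
open MeasureTheory Matrix

/-- `A` reordered compatibly with the partition `(a, aᶜ)`. -/
def reorder {d : ℕ} (A : Matrix (Fin d) (Fin d) ℝ) (a : Finset (Fin d)) :
    Matrix (↥a ⊕ ↥(aᶜ)) (↥a ⊕ ↥(aᶜ)) ℝ :=
  A.submatrix (Sum.elim Subtype.val Subtype.val) (Sum.elim Subtype.val Subtype.val)

/-- `B = inv_a Ã`, the reordered matrix partially inverted on `a`. -/
noncomputable def Btil {d : ℕ} (A : Matrix (Fin d) (Fin d) ℝ) (a : Finset (Fin d))
    (la : List (↥a ⊕ ↥(aᶜ))) : Matrix (↥a ⊕ ↥(aᶜ)) (↥a ⊕ ↥(aᶜ)) ℝ :=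
  invList la (reorder A a)

/-- `η_b = ε_b − B_{ba} ε_a`. -/
noncomputable def etaB {d : ℕ} (A : Matrix (Fin d) (Fin d) ℝ) (a : Finset (Fin d))
    (la : List (↥a ⊕ ↥(aᶜ))) (e : Fin d → ℝ) : ↥(aᶜ) → ℝ :=
  fun j => e ↑j - (Btil A a la).toBlocks₂₁.mulVec (fun i : ↥a => e ↑i) j

/-! Partial inversion at a pivot `k` is one step of Gauss–Jordan elimination: it trades `x k` and
`y k` in the system `M x = y`. For a unit triangular matrix every pivot stays `1` and
triangularity is preserved, so sweeping through the indices of `a` turns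
`Ã (Y_a; Y_b) = (ε_a; ε_b)` into `(inv_a Ã) (ε_a; Y_b) = (Y_a; ε_b)`, whose `b`-rows read
`B_bb Y_b = ε_b - B_ba ε_a`. For the covariances, `(ε_a, η_b)` is the image of `ε` under the
matrices `P_a` and `P_b - B_ba P_a`, where `P_s` selects the coordinates in `s`; a linear image
`C ε` has second moments `C Δ Cᵀ`, and the cross blocks `Δ_ab`, `Δ_ba` vanish as `Δ` is diagonal. -/

section PartialInversion

variable {ι : Type*} [DecidableEq ι]

theorem invStep_mulVec_update_s19 [Fintype ι] {M : Matrix ι ι ℝ} {k : ι} (hk : M k k ≠ 0)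
    {x y : ι → ℝ} (h : M *ᵥ x = y) :
    invStep M k *ᵥ Function.update x k (y k) = Function.update y k (x k) := by
  have hrow : ∀ i, y i = M i k * x k + ∑ j ∈ {k}ᶜ, M i j * x j := fun i => by
    rw [← h, mulVec, dotProduct, Fintype.sum_eq_add_sum_compl k]
  ext i
  rw [mulVec, dotProduct, Fintype.sum_eq_add_sum_compl k, Function.update_self]
  by_cases hik : i = k
  · subst hik
    have hoff : ∑ j ∈ {i}ᶜ, invStep M i i j * Function.update x i (y i) j
        = -(∑ j ∈ {i}ᶜ, M i j * x j) / M i i := by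
      rw [neg_div, Finset.sum_div, ← Finset.sum_neg_distrib]
      refine Finset.sum_congr rfl fun j hj => ?_
      have hji : j ≠ i := by simpa using hj
      simp only [invStep, of_apply, ↓reduceIte, hji, Function.update_of_ne hji]
      ring
    rw [hoff, Function.update_self, hrow i]
    simp only [invStep, one_div, of_apply, ↓reduceIte]
    field_simp
    ring
  · have hoff : ∑ j ∈ {k}ᶜ, invStep M k i j * Function.update x k (y k) j
        = ∑ j ∈ {k}ᶜ, M i j * x j - M i k / M k k * ∑ j ∈ {k}ᶜ, M k j * x j := by
      rw [Finset.mul_sum, ← Finset.sum_sub_distrib]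
      refine Finset.sum_congr rfl fun j hj => ?_
      have hjk : j ≠ k := by simpa using hj
      simp only [invStep, of_apply, ↓reduceIte, hik, hjk, Function.update_of_ne hjk]
      ring
    rw [hoff, Function.update_of_ne hik, hrow i, hrow k]
    simp only [invStep, one_div, of_apply, hik, ↓reduceIte]
    field_simp
    ring

theorem blockTriangular_invStep {α : Type*} [LinearOrder α] {b : ι → α} {M : Matrix ι ι ℝ}
    (hM : M.BlockTriangular b) (k : ι) : (invStep M k).BlockTriangular b := by
  intro i j hji
  by_cases hik : i = k
  · subst hik
    simp [invStep, (ne_of_apply_ne b hji.ne), hM hji]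
  by_cases hjk : j = k
  · subst hjk
    simp [invStep, hik, hM hji]
  · have hprod : M i k * M k j = 0 := by
      rcases lt_or_ge (b k) (b i) with hki | hik'
      · rw [hM hki, zero_mul]
      · rw [hM (hji.trans_le hik'), mul_zero]
    simp [invStep, hik, hjk, hM hji, hprod]

theorem invStep_diag_eq_one {α : Type*} [LinearOrder α] {b : ι → α} (hb : Function.Injective b)
    {M : Matrix ι ι ℝ} (hM : M.BlockTriangular b) (hdiag : ∀ i, M i i = 1) (k i : ι) :
    invStep M k i i = 1 := by
  by_cases hik : i = k
  · subst hik
    simp [invStep, hdiag]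
  · have hprod : M i k * M k i = 0 := by
      rcases lt_or_gt_of_ne (hb.ne hik) with hlt | hlt
      · rw [hM hlt, mul_zero]
      · rw [hM hlt, zero_mul]
    simp [invStep, hik, hprod, hdiag]

theorem invList_cons (k : ι) (l : List ι) (M : Matrix ι ι ℝ) :
    invList (k :: l) M = invList l (invStep M k) :=
  rfl

theorem invList_mulVec_exchange [Fintype ι] {α : Type*} [LinearOrder α] {b : ι → α}
    (hb : Function.Injective b) {l : List ι} (hl : l.Nodup) {M : Matrix ι ι ℝ}
    (hM : M.BlockTriangular b) (hdiag : ∀ i, M i i = 1) {x y : ι → ℝ} (h : M *ᵥ x = y) :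
    invList l M *ᵥ l.toFinset.piecewise y x = l.toFinset.piecewise x y := by
  induction l generalizing M x y with
  | nil => exact h
  | cons k l ih =>
    obtain ⟨hkl, hl⟩ := List.nodup_cons.mp hl
    have hstep := invStep_mulVec_update_s19 (by rw [hdiag k]; exact one_ne_zero) h
    have hupd : ∀ u v : ι → ℝ, l.toFinset.piecewise (Function.update u k (v k))
        (Function.update v k (u k)) = (k :: l).toFinset.piecewise u v := by
      intro u v
      ext i
      by_cases hik : i = k
      · subst hik
        simp [hkl]
      · simp [Finset.piecewise, hik]
    simpa only [hupd, invList_cons] using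
      ih hl (blockTriangular_invStep hM k) (invStep_diag_eq_one hb hM hdiag k) hstep

theorem invList_mulVec_sumElim {m n : Type*} [Fintype m] [Fintype n] [DecidableEq m]
    [DecidableEq n] {α : Type*} [LinearOrder α] {b : m ⊕ n → α} (hb : Function.Injective b)
    {l : List (m ⊕ n)} (hl : l.Nodup) (hmem : ∀ x, x ∈ l ↔ ∃ y, x = Sum.inl y)
    {M : Matrix (m ⊕ n) (m ⊕ n) ℝ} (hM : M.BlockTriangular b) (hdiag : ∀ i, M i i = 1)
    {xa ya : m → ℝ} {xb yb : n → ℝ} (h : M *ᵥ Sum.elim xa xb = Sum.elim ya yb) :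
    invList l M *ᵥ Sum.elim ya xb = Sum.elim xa yb := by
  have hpiece : ∀ (u u' : m → ℝ) (v v' : n → ℝ),
      l.toFinset.piecewise (Sum.elim u v) (Sum.elim u' v') = Sum.elim u v' := by
    intro u u' v v'
    ext (i | i) <;> simp [Finset.piecewise, hmem]
  simpa only [hpiece] using invList_mulVec_exchange hb hl hM hdiag h

theorem Matrix.toBlocks₂₂_mulVec_eq_sub {R l m n o : Type*} [Ring R] [Fintype l] [Fintype m]
    {B : Matrix (n ⊕ o) (l ⊕ m) R} {u : l → R} {v : m → R} {w : n → R} {z : o → R}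
    (h : B *ᵥ Sum.elim u v = Sum.elim w z) :
    B.toBlocks₂₂ *ᵥ v = z - B.toBlocks₂₁ *ᵥ u := by
  rw [← fromBlocks_toBlocks B, fromBlocks_mulVec] at h
  have hz := congrArg (· ∘ Sum.inr) h
  simp only [Sum.elim_comp_inr, Sum.elim_comp_inl] at hz
  rw [← hz]
  abel

end PartialInversion

noncomputable def Finset.sumComplEquiv {ι : Type*} [Fintype ι] [DecidableEq ι] (s : Finset ι) :
    ↥s ⊕ ↥sᶜ ≃ ι :=
  Equiv.ofBijective (Sum.elim (↑) (↑))
    ⟨Subtype.val_injective.sumElim Subtype.val_injective fun x y h =>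
      Finset.mem_compl.mp y.2 (h ▸ x.2),
    fun i => if hi : i ∈ s then ⟨.inl ⟨i, hi⟩, rfl⟩ else ⟨.inr ⟨i, Finset.mem_compl.mpr hi⟩, rfl⟩⟩

section Reordering

variable {d : ℕ} (A : Matrix (Fin d) (Fin d) ℝ) (a : Finset (Fin d))

theorem reorder_eq_submatrix : reorder A a = A.submatrix a.sumComplEquiv a.sumComplEquiv :=
  rfl

theorem reorder_mulVec (y : Fin d → ℝ) :
    reorder A a *ᵥ Sum.elim (fun i : a => y i) (fun j : ↥aᶜ => y j) =
      Sum.elim (fun i : a => (A *ᵥ y) i) (fun j : ↥aᶜ => (A *ᵥ y) j) := by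
  have hy : Sum.elim (fun i : a => y i) (fun j : ↥aᶜ => y j) = y ∘ a.sumComplEquiv := by
    ext (i | j) <;> rfl
  rw [reorder_eq_submatrix, submatrix_mulVec_equiv, hy, Function.comp_assoc,
    Equiv.self_comp_symm, Function.comp_id]
  ext (i | j) <;> rfl

theorem toBlocks₂₂_Btil_mulVec (htri : A.BlockTriangular id) (hunit : ∀ i, A i i = 1)
    {la : List (↥a ⊕ ↥aᶜ)} (hna : la.Nodup) (hmem : ∀ x, x ∈ la ↔ ∃ y, x = Sum.inl y)
    {y e : Fin d → ℝ} (h : A *ᵥ y = e) :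
    (Btil A a la).toBlocks₂₂ *ᵥ (fun j : ↥aᶜ => y j) = etaB A a la e := by
  have hM : (reorder A a).BlockTriangular a.sumComplEquiv := htri.submatrix
  have hexch := invList_mulVec_sumElim a.sumComplEquiv.injective hna hmem hM (fun _ => hunit _)
    (reorder_mulVec A a y)
  rw [Btil, toBlocks₂₂_mulVec_eq_sub hexch, h]
  rfl

end Reordering

section Covariance

theorem integral_mulVec_mul_mulVec {Ω n m m' : Type*} [MeasurableSpace Ω] {μ : Measure Ω}
    [Fintype n] {ε : Ω → n → ℝ} {Δ : Matrix n n ℝ}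
    (hint : ∀ i j, Integrable (fun ω => ε ω i * ε ω j) μ)
    (hcov : ∀ i j, ∫ ω, ε ω i * ε ω j ∂μ = Δ i j) (C : Matrix m n ℝ) (D : Matrix m' n ℝ)
    (i : m) (j : m') :
    ∫ ω, (C *ᵥ ε ω) i * (D *ᵥ ε ω) j ∂μ = (C * Δ * Dᵀ) i j := by
  have hexpand : ∀ ω, (C *ᵥ ε ω) i * (D *ᵥ ε ω) j =
      ∑ k, ∑ l, C i k * D j l * (ε ω k * ε ω l) := fun ω => by
    simp only [mulVec, dotProduct, Finset.sum_mul_sum]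
    exact Finset.sum_congr rfl fun k _ => Finset.sum_congr rfl fun l _ => by ring
  calc ∫ ω, (C *ᵥ ε ω) i * (D *ᵥ ε ω) j ∂μ
      = ∑ k, ∑ l, C i k * D j l * ∫ ω, ε ω k * ε ω l ∂μ := by
        simp_rw [hexpand]
        rw [integral_finsetSum _ fun k _ => integrable_finsetSum _ fun l _ =>
          (hint k l).const_mul _]
        refine Finset.sum_congr rfl fun k _ => ?_
        rw [integral_finsetSum _ fun l _ => (hint k l).const_mul _]
        simp_rw [integral_const_mul]
    _ = (C * Δ * Dᵀ) i j := by
        simp only [hcov, mul_apply, transpose_apply, Finset.sum_mul]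
        rw [Finset.sum_comm]
        exact Finset.sum_congr rfl fun k _ => Finset.sum_congr rfl fun l _ => by ring

end Covariance

theorem Matrix.IsDiag.submatrix_eq_zero {n m m' α : Type*} [Zero α] {M : Matrix n n α}
    (hM : M.IsDiag) {r : m → n} {c : m' → n} (hrc : ∀ i j, r i ≠ c j) : M.submatrix r c = 0 := by
  ext i j
  exact hM (hrc i j)

def selectionMatrix (R : Type*) {m n : Type*} [Zero R] [One R] [DecidableEq n] (r : m → n) :
    Matrix m n R :=
  (1 : Matrix n n R).submatrix r id

section Selection

variable {R n m m' : Type*} [CommRing R] [Fintype n] [DecidableEq n]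

theorem selectionMatrix_mulVec (r : m → n) (v : n → R) : selectionMatrix R r *ᵥ v = v ∘ r := by
  ext i
  simp [selectionMatrix, mulVec, dotProduct, one_apply]

theorem selectionMatrix_mul_mul_transpose (r : m → n) (c : m' → n) (M : Matrix n n R) :
    selectionMatrix R r * M * (selectionMatrix R c)ᵀ = M.submatrix r c := by
  ext i j
  simp [selectionMatrix, mul_apply, one_apply]

theorem selectionMatrix_mul_mul_transpose_sub [Fintype m] {r : m → n} {c : m' → n}
    {M : Matrix n n R} (hrc : M.submatrix r c = 0) (B : Matrix m' m R) :
    selectionMatrix R r * M * (selectionMatrix R c - B * selectionMatrix R r)ᵀ =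
      -(M.submatrix r r * Bᵀ) := by
  rw [transpose_sub, transpose_mul, Matrix.mul_sub, ← Matrix.mul_assoc _ _ Bᵀ,
    selectionMatrix_mul_mul_transpose, selectionMatrix_mul_mul_transpose, hrc, zero_sub]

theorem sub_selectionMatrix_mul_mul_transpose_sub [Fintype m] {r : m → n} {c : m' → n}
    {M : Matrix n n R} (hrc : M.submatrix r c = 0) (hcr : M.submatrix c r = 0) (B : Matrix m' m R) :
    (selectionMatrix R c - B * selectionMatrix R r) * M *
        (selectionMatrix R c - B * selectionMatrix R r)ᵀ =
      M.submatrix c c + B * M.submatrix r r * Bᵀ := by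
  set P := selectionMatrix R r
  set Q := selectionMatrix R c
  calc (Q - B * P) * M * (Q - B * P)ᵀ
      = Q * M * Qᵀ - Q * M * Pᵀ * Bᵀ - B * (P * M * Qᵀ) + B * (P * M * Pᵀ) * Bᵀ := by
        simp only [transpose_sub, transpose_mul, Matrix.sub_mul, Matrix.mul_sub,
          Matrix.mul_assoc]
        abel
    _ = M.submatrix c c + B * M.submatrix r r * Bᵀ := by
        simp only [P, Q, selectionMatrix_mul_mul_transpose, hrc, hcr, Matrix.zero_mul,
          Matrix.mul_zero, sub_zero]

end Selection

theorem etaB_eq_mulVec {d : ℕ} (A : Matrix (Fin d) (Fin d) ℝ) (a : Finset (Fin d))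
    (la : List (↥a ⊕ ↥aᶜ)) (e : Fin d → ℝ) :
    etaB A a la e = (selectionMatrix ℝ ((↑) : ↥aᶜ → Fin d) -
      (Btil A a la).toBlocks₂₁ * selectionMatrix ℝ ((↑) : a → Fin d)) *ᵥ e := by
  rw [sub_mulVec, ← mulVec_mulVec, selectionMatrix_mulVec, selectionMatrix_mulVec]
  rfl

theorem triangular_elimination_general {d : ℕ} {Ω : Type*} [MeasureSpace Ω]
    (A Δ : Matrix (Fin d) (Fin d) ℝ)
    (htri : A.BlockTriangular id) (hunit : ∀ i, A i i = 1)
    (hΔdiag : Δ.IsDiag)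
    (a : Finset (Fin d)) (la : List (↥a ⊕ ↥(aᶜ)))
    (hna : la.Nodup) (hmem : ∀ x : ↥a ⊕ ↥(aᶜ), x ∈ la ↔ ∃ y : ↥a, x = Sum.inl y)
    (ε : Ω → Fin d → ℝ)
    (hint : ∀ i j, Integrable fun ω => ε ω i * ε ω j)
    (hcov : ∀ i j, ∫ ω, ε ω i * ε ω j = Δ i j) :
    (∀ (y e : Fin d → ℝ), A.mulVec y = e →
        (Btil A a la).toBlocks₂₂.mulVec (fun j : ↥(aᶜ) => y ↑j) = etaB A a la e) ∧
      (∀ i j : ↥a, ∫ ω, ε ω ↑i * ε ω ↑j =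
        (Matrix.of fun p q : ↥a => Δ ↑p ↑q) i j) ∧
      (∀ (i : ↥a) (j : ↥(aᶜ)), ∫ ω, ε ω ↑i * etaB A a la (ε ω) j =
        (-((Matrix.of fun p q : ↥a => Δ ↑p ↑q) * ((Btil A a la).toBlocks₂₁)ᵀ)) i j) ∧
      (∀ i j : ↥(aᶜ), ∫ ω, etaB A a la (ε ω) i * etaB A a la (ε ω) j =
        ((Matrix.of fun p q : ↥(aᶜ) => Δ ↑p ↑q) +
          (Btil A a la).toBlocks₂₁ * (Matrix.of fun p q : ↥a => Δ ↑p ↑q) *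
            ((Btil A a la).toBlocks₂₁)ᵀ) i j) := by
  set Pa := selectionMatrix ℝ ((↑) : a → Fin d)
  set Pb := selectionMatrix ℝ ((↑) : ↥aᶜ → Fin d)
  have hη : ∀ e, etaB A a la e = (Pb - (Btil A a la).toBlocks₂₁ * Pa) *ᵥ e :=
    etaB_eq_mulVec A a la
  have hab : Δ.submatrix ((↑) : a → Fin d) ((↑) : ↥aᶜ → Fin d) = 0 :=
    hΔdiag.submatrix_eq_zero fun i j h => Finset.mem_compl.mp j.2 (h ▸ i.2)
  have hba : Δ.submatrix ((↑) : ↥aᶜ → Fin d) ((↑) : a → Fin d) = 0 :=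
    hΔdiag.submatrix_eq_zero fun j i h => Finset.mem_compl.mp j.2 (h ▸ i.2)
  refine ⟨fun y e h => toBlocks₂₂_Btil_mulVec A a htri hunit hna hmem h, fun i j => hcov i j,
    fun i j => ?_, fun i j => ?_⟩
  · have hεa : ∀ ω, ε ω i = (Pa *ᵥ ε ω) i := fun ω => by rw [selectionMatrix_mulVec]; rfl
    simp only [hεa, hη]
    rw [integral_mulVec_mul_mulVec hint hcov, selectionMatrix_mul_mul_transpose_sub hab]
    rfl
  · simp only [hη]
    rw [integral_mulVec_mul_mulVec hint hcov, sub_selectionMatrix_mul_mul_transpose_sub hab hba]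
    rfl

/-- in a triangular system `A Y = ε` with `cov(ε) = Δ` diagonal, if
`B = inv_a Ã` is the reordered matrix partially inverted on `a`, then eliminating
`Y_a` gives `B_{bb} Y_b = η_b` with `η_b = ε_b − B_{ba} ε_a`, and
`cov(ε_a, η_b) = (Δ_{aa}, −Δ_{aa}B_{ba}ᵀ; −B_{ba}Δ_{aa}, Δ_{bb} + B_{ba}Δ_{aa}B_{ba}ᵀ)`. -/
theorem triangular_elimination {d : ℕ} {Ω : Type*} [MeasureSpace Ω]
    [IsProbabilityMeasure (volume : Measure Ω)]
    (A Δ : Matrix (Fin d) (Fin d) ℝ)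
    (htri : A.BlockTriangular id) (hunit : ∀ i, A i i = 1)
    (hΔdiag : Δ.IsDiag) (hΔpos : ∀ i, 0 < Δ i i)
    (a : Finset (Fin d)) (la : List (↥a ⊕ ↥(aᶜ)))
    (hna : la.Nodup) (hmem : ∀ x : ↥a ⊕ ↥(aᶜ), x ∈ la ↔ ∃ y : ↥a, x = Sum.inl y)
    (ε : Ω → Fin d → ℝ)
    (hmeas : ∀ i, Measurable fun ω => ε ω i)
    (hmean : ∀ i, ∫ ω, ε ω i = 0)
    (hint : ∀ i j, Integrable fun ω => ε ω i * ε ω j)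
    (hcov : ∀ i j, ∫ ω, ε ω i * ε ω j = Δ i j) :
    (∀ (y e : Fin d → ℝ), A.mulVec y = e →
        (Btil A a la).toBlocks₂₂.mulVec (fun j : ↥(aᶜ) => y ↑j) = etaB A a la e) ∧
      (∀ i j : ↥a, ∫ ω, ε ω ↑i * ε ω ↑j =
        (Matrix.of fun p q : ↥a => Δ ↑p ↑q) i j) ∧
      (∀ (i : ↥a) (j : ↥(aᶜ)), ∫ ω, ε ω ↑i * etaB A a la (ε ω) j =
        (-((Matrix.of fun p q : ↥a => Δ ↑p ↑q) * ((Btil A a la).toBlocks₂₁)ᵀ)) i j) ∧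
      (∀ i j : ↥(aᶜ), ∫ ω, etaB A a la (ε ω) i * etaB A a la (ε ω) j =
        ((Matrix.of fun p q : ↥(aᶜ) => Δ ↑p ↑q) +
          (Btil A a la).toBlocks₂₁ * (Matrix.of fun p q : ↥a => Δ ↑p ↑q) *
            ((Btil A a la).toBlocks₂₁)ᵀ) i j) :=
  triangular_elimination_general A Δ htri hunit hΔdiag a la hna hmem ε hint hcov
end
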